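/- arXiv:2601.15627 — 2 statements merged into one kernel-verified Lean document; each statement's English description precedes it below -/
import Mathlib

section
/- Let {η_i} be independent square-integrable real random variables and S_x = Σ_{i=1}^x η_i. If Var[S_x] → ∞ as x → ∞, then for every ε > 0, (S_x - E[S_x])/(Var[S_x])^{1/2+ε} → 0 almost surely. -/
/-!
Put `M n = 1 + Var[S n]` and `b n = M n ^ (1/2 + ε)`. The normalized increments
`(η k - E η k) / b k` are independent, centred, and the sum of their variances is
`∑ (M k - M (k-1)) / M k ^ (1 + 2ε) ≤ ∫₁^∞ x ^ (-1 - 2ε) dx < ∞`. Their partial sums therefore form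
an `L²`-bounded martingale, which converges almost surely, and Kronecker's lemma turns this into
`(S n - E S n) / b n → 0`. Since `Var[S n] → ∞`, `b n` is asymptotic to `Var[S n] ^ (1/2 + ε)`.
-/

open MeasureTheory ProbabilityTheory Filter Finset Topology Asymptotics

theorem tendsto_sum_sub_mul_div_of_tendsto {b u : ℕ → ℝ} {L : ℝ} (hb : Monotone b)
    (hb0 : 0 ≤ b 0) (hbtop : Tendsto b atTop atTop) (hu : Tendsto u atTop (𝓝 L)) :
    Tendsto (fun n => (∑ i ∈ range n, (b (i + 1) - b i) * u i) / b n) atTop (𝓝 L) := by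
  have hd : ∀ i, 0 ≤ b (i + 1) - b i := fun i => sub_nonneg.2 (hb i.le_succ)
  have hsum : ∀ n, ∑ i ∈ range n, (b (i + 1) - b i) = b n - b 0 := sum_range_sub b
  -- Weighted Cesàro: the weights `b (i + 1) - b i` sum to `b n - b 0 → ∞`.
  have hsmall : (fun n => ∑ i ∈ range n, (b (i + 1) - b i) * (u i - L)) =o[atTop] b := by
    have h := (isBigO_refl (fun i => b (i + 1) - b i) atTop).mul_isLittleO
      ((isLittleO_one_iff ℝ).2 (tendsto_sub_nhds_zero_iff.2 hu))
    simp only [mul_one] at h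
    refine (h.sum_range hd ?_).trans_isBigO (isBigO_of_le _ fun n => ?_)
    · exact (tendsto_atTop_add_const_right _ (-b 0) hbtop).congr fun n => by
        rw [hsum, sub_eq_add_neg]
    · rw [hsum, Real.norm_of_nonneg (sub_nonneg.2 (hb n.zero_le)),
        Real.norm_of_nonneg (hb0.trans (hb n.zero_le))]
      linarith
  have hlim := (hsmall.tendsto_div_nhds_zero.add_const L).sub
    (((tendsto_const_nhds (x := b 0)).div_atTop hbtop).const_mul L)
  rw [zero_add, mul_zero, sub_zero] at hlim
  refine hlim.congr' ?_
  filter_upwards [hbtop.eventually_gt_atTop 0] with n hn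
  simp only [mul_sub, sum_sub_distrib, ← sum_mul, hsum]
  field_simp
  ring

/-- Kronecker's lemma. -/
theorem tendsto_sum_div_of_tendsto_sum_div {a b : ℕ → ℝ} {L : ℝ} (hb : Monotone b)
    (hb0 : 0 < b 0) (hbtop : Tendsto b atTop atTop)
    (h : Tendsto (fun n => ∑ i ∈ range n, a i / b i) atTop (𝓝 L)) :
    Tendsto (fun n => (∑ i ∈ range (n + 1), a i) / b n) atTop (𝓝 0) := by
  set u : ℕ → ℝ := fun n => ∑ i ∈ range n, a i / b i
  have hpos : ∀ n, 0 < b n := fun n => hb0.trans_le (hb n.zero_le)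
  have habel : ∀ n, ∑ i ∈ range (n + 1), a i
      = b n * u (n + 1) - ∑ i ∈ range n, (b (i + 1) - b i) * u (i + 1) := by
    intro n
    simpa [mul_div_cancel₀ _ (hpos _).ne'] using
      sum_range_by_parts b (fun i => a i / b i) (n + 1)
  have hu : Tendsto (fun n => u (n + 1)) atTop (𝓝 L) := h.comp (tendsto_add_atTop_nat 1)
  have hlim := hu.sub (tendsto_sum_sub_mul_div_of_tendsto hb hb0.le hbtop hu)
  rw [sub_self] at hlim
  refine hlim.congr fun n => ?_
  rw [habel, sub_div, mul_div_cancel_left₀ _ (hpos n).ne']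

theorem sub_div_rpow_one_add_le {a b δ : ℝ} (ha : 0 < a) (hab : a ≤ b) (hδ : 0 < δ) :
    (b - a) / b ^ (1 + δ) ≤ (a ^ (-δ) - b ^ (-δ)) / δ := by
  have hb := ha.trans_le hab
  -- Bernoulli at `b / a` with exponent `1 + δ` is the claim after clearing denominators.
  have hbern := one_add_mul_self_le_rpow_one_add (s := b / a - 1)
    (by linarith [div_nonneg hb.le ha.le]) (p := 1 + δ) (by linarith)
  have hA := Real.rpow_pos_of_pos ha δ
  have hB := Real.rpow_pos_of_pos hb δ
  rw [add_sub_cancel, Real.div_rpow hb.le ha.le, Real.rpow_one_add' hb.le (by linarith),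
    Real.rpow_one_add' ha.le (by linarith), le_div_iff₀ (by positivity)] at hbern
  rw [Real.rpow_one_add' hb.le (by linarith), Real.rpow_neg ha.le, Real.rpow_neg hb.le,
    div_le_div_iff₀ (by positivity) hδ]
  field_simp
  field_simp at hbern
  nlinarith

theorem sum_sub_div_rpow_one_add_le {M : ℕ → ℝ} (hM : Monotone M) (hM0 : 0 < M 0) {δ : ℝ}
    (hδ : 0 < δ) (n : ℕ) :
    ∑ k ∈ range n, (M (k + 1) - M k) / M (k + 1) ^ (1 + δ) ≤ M 0 ^ (-δ) / δ := by
  have hpos : ∀ k, 0 < M k := fun k => hM0.trans_le (hM k.zero_le)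
  calc ∑ k ∈ range n, (M (k + 1) - M k) / M (k + 1) ^ (1 + δ)
      ≤ ∑ k ∈ range n, (M k ^ (-δ) / δ - M (k + 1) ^ (-δ) / δ) :=
        sum_le_sum fun k _ => by
          rw [← sub_div]; exact sub_div_rpow_one_add_le (hpos k) (hM k.le_succ) hδ
    _ = M 0 ^ (-δ) / δ - M n ^ (-δ) / δ := sum_range_sub' _ n
    _ ≤ M 0 ^ (-δ) / δ := sub_le_self _ (by have := hpos n; positivity)

theorem sum_Icc_one_eq_sum_range {M : Type*} [AddCommMonoid M] (f : ℕ → M) (n : ℕ) :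
    ∑ i ∈ Icc 1 n, f i = ∑ i ∈ range n, f (i + 1) := by
  induction n with
  | zero => simp
  | succ n ih => rw [sum_Icc_succ_top (by omega), ih, sum_range_succ]

theorem tendsto_div_rpow_of_tendsto_div_one_add_rpow {α : Type*} {l : Filter α} {f v : α → ℝ}
    {ρ : ℝ} (hv : Tendsto v l atTop) (hf : Tendsto (fun x => f x / (1 + v x) ^ ρ) l (𝓝 0)) :
    Tendsto (fun x => f x / v x ^ ρ) l (𝓝 0) := by
  have hratio : Tendsto (fun x => (1 + v x) ^ ρ / v x ^ ρ) l (𝓝 1) := by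
    have h := ((tendsto_inv_atTop_zero.comp hv).const_add 1).rpow_const (p := ρ) (by simp)
    rw [add_zero, Real.one_rpow] at h
    refine h.congr' ?_
    filter_upwards [hv.eventually_gt_atTop 0] with x hx
    rw [← Real.div_rpow (by positivity) hx.le, Function.comp_apply, add_div, div_self hx.ne',
      one_div, add_comm]
  have h := hf.mul hratio
  rw [zero_mul] at h
  refine h.congr' ?_
  filter_upwards [hv.eventually_gt_atTop 0] with x hx
  have : 0 < (1 + v x) ^ ρ := by positivity
  field_simp

section
variable {Ω : Type*} [MeasurableSpace Ω] {μ : Measure Ω} [IsProbabilityMeasure μ]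

theorem eLpNorm_one_le_sqrt_variance {X : Ω → ℝ} (hX : MemLp X 2 μ) (h0 : μ[X] = 0) :
    eLpNorm X 1 μ ≤ ENNReal.ofReal √(Var[X; μ]) := by
  have habs : MemLp (fun ω => |X ω|) 2 μ := hX.abs
  have hsq : (∫ ω, |X ω| ∂μ) ^ 2 ≤ Var[X; μ] := by
    have := variance_nonneg (fun ω => |X ω|) μ
    rw [variance_eq_sub habs] at this
    rw [variance_of_integral_eq_zero hX.aemeasurable h0]
    simpa [Pi.pow_apply, sq_abs] using this
  rw [eLpNorm_one_eq_lintegral_enorm,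
    ← ofReal_integral_norm_eq_lintegral_enorm (hX.integrable one_le_two)]
  exact ENNReal.ofReal_le_ofReal (Real.le_sqrt_of_sq_le hsq)

theorem ProbabilityTheory.iIndepFun.ae_exists_tendsto_sum_of_stronglyMeasurable
    {W : ℕ → Ω → ℝ} (hsm : ∀ i, StronglyMeasurable (W i)) (hind : iIndepFun W μ)
    (hL2 : ∀ i, MemLp (W i) 2 μ)
    (hmean : ∀ i, μ[W i] = 0) {C : ℝ} (hC : ∀ n, ∑ i ∈ range n, Var[W i; μ] ≤ C) :
    ∀ᵐ ω ∂μ, ∃ c, Tendsto (fun n => ∑ i ∈ range n, W i ω) atTop (𝓝 c) := by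
  set ℱ := Filtration.natural W hsm
  set f : ℕ → Ω → ℝ := fun n => ∑ i ∈ range (n + 1), W i
  have hfL2 : ∀ n, MemLp (f n) 2 μ := fun n => memLp_finsetSum' _ fun i _ => hL2 i
  have hmart : Martingale f ℱ μ := by
    refine martingale_of_condExp_sub_eq_zero_nat (fun n => ?_)
      (fun n => (hfL2 n).integrable one_le_two) (fun n => ?_)
    · refine Finset.stronglyMeasurable_sum _ fun i hi => ?_
      exact (Filtration.stronglyAdapted_natural hsm i).mono
        (ℱ.mono (Nat.lt_succ_iff.1 (mem_range.1 hi)))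
    · have hinc : f (n + 1) - f n = W (n + 1) := by simp [f, sum_range_succ]
      rw [hinc]
      refine (hind.condExp_natural_ae_eq_of_lt hsm n.lt_succ_self).trans ?_
      simp only [hmean]
      rfl
  have hbdd : ∀ n, eLpNorm (f n) 1 μ ≤ ENNReal.ofReal √C := by
    intro n
    refine (eLpNorm_one_le_sqrt_variance (hfL2 n) ?_).trans ?_
    · simp [f, integral_finsetSum _ fun i _ => (hL2 i).integrable one_le_two, hmean]
    · rw [IndepFun.variance_sum (fun i _ => hL2 i) fun i _ j _ hij => hind.indepFun hij]
      gcongr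
      exact hC _
  filter_upwards [hmart.submartingale.exists_ae_tendsto_of_bdd hbdd] with ω ⟨c, hc⟩
  exact ⟨c, (tendsto_add_atTop_iff_nat 1).1 (by simpa [f] using hc)⟩

theorem ProbabilityTheory.iIndepFun.ae_exists_tendsto_sum {W : ℕ → Ω → ℝ}
    (hind : iIndepFun W μ) (hL2 : ∀ i, MemLp (W i) 2 μ)
    (hmean : ∀ i, μ[W i] = 0) {C : ℝ} (hC : ∀ n, ∑ i ∈ range n, Var[W i; μ] ≤ C) :
    ∀ᵐ ω ∂μ, ∃ c, Tendsto (fun n => ∑ i ∈ range n, W i ω) atTop (𝓝 c) := by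
  set W' : ℕ → Ω → ℝ := fun i => (hL2 i).aestronglyMeasurable.mk (W i)
  have hW : ∀ i, W i =ᵐ[μ] W' i := fun i => (hL2 i).aestronglyMeasurable.ae_eq_mk
  have hconv := iIndepFun.ae_exists_tendsto_sum_of_stronglyMeasurable
    (fun i => (hL2 i).aestronglyMeasurable.stronglyMeasurable_mk) (hind.congr hW)
    (fun i => (hL2 i).ae_eq (hW i)) (fun i => (integral_congr_ae (hW i)).symm.trans (hmean i))
    fun n => by simpa only [variance_congr (hW _)] using hC n
  filter_upwards [hconv, ae_all_iff.2 hW] with ω ⟨c, hc⟩ hω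
  exact ⟨c, by simpa only [hω] using hc⟩

theorem ProbabilityTheory.iIndepFun.ae_tendsto_sum_sub_integral_div_one_add_variance_rpow
    {ξ : ℕ → Ω → ℝ} (hind : iIndepFun ξ μ) (hL2 : ∀ i, MemLp (ξ i) 2 μ)
    (hVar : Tendsto (fun n => Var[fun ω => ∑ i ∈ range n, ξ i ω; μ]) atTop atTop)
    {ε : ℝ} (hε : 0 < ε) :
    ∀ᵐ ω ∂μ, Tendsto (fun n => (∑ i ∈ range n, (ξ i ω - μ[ξ i])) /
      (1 + Var[fun ω => ∑ i ∈ range n, ξ i ω; μ]) ^ ((1 : ℝ) / 2 + ε)) atTop (𝓝 0) := by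
  set M : ℕ → ℝ := fun n => 1 + Var[fun ω => ∑ i ∈ range n, ξ i ω; μ]
  have hMsucc : ∀ n, M (n + 1) = M n + Var[ξ n; μ] := by
    intro n
    simp only [M, ← Finset.sum_fn,
      IndepFun.variance_sum (fun i _ => hL2 i) fun i _ j _ hij => hind.indepFun hij,
      sum_range_succ]
    ring
  have hM : Monotone M :=
    monotone_nat_of_le_succ fun n => by rw [hMsucc]; linarith [variance_nonneg (ξ n) μ]
  have hM0 : M 0 = 1 := by simp [M, ← Pi.zero_def]
  have hMpos : ∀ n, 0 < M n := fun n => by linarith [hM n.zero_le]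
  set b : ℕ → ℝ := fun n => M (n + 1) ^ ((1 : ℝ) / 2 + ε)
  have hbpos : ∀ n, 0 < b n := fun n => Real.rpow_pos_of_pos (hMpos _) _
  have hb : Monotone b := fun m n hmn =>
    Real.rpow_le_rpow (hMpos _).le (hM (by omega)) (by linarith)
  have hbtop : Tendsto b atTop atTop :=
    (tendsto_rpow_atTop (by linarith)).comp
      ((tendsto_atTop_add_const_left _ 1 hVar).comp (tendsto_add_atTop_nat 1))
  set W : ℕ → Ω → ℝ := fun k ω => (ξ k ω - μ[ξ k]) / b k
  have hWvar : ∀ k, Var[W k; μ] = (M (k + 1) - M k) / M (k + 1) ^ (1 + 2 * ε) := by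
    intro k
    have hb2 : b k ^ 2 = M (k + 1) ^ (1 + 2 * ε) := by
      rw [← Real.rpow_natCast, ← Real.rpow_mul (hMpos _).le]
      ring_nf
    simp only [W, div_eq_mul_inv, variance_mul_const,
      variance_sub_const (hL2 k).aestronglyMeasurable]
    rw [inv_pow, hb2, hMsucc k, add_sub_cancel_left]
  have hWind : iIndepFun W μ :=
    hind.comp (fun k x => (x - ∫ ω, ξ k ω ∂μ) / b k) fun k => by fun_prop
  have hconv := hWind.ae_exists_tendsto_sum
    (fun k => ((hL2 k).sub (memLp_const _)).mul_const _)
    (fun k => by simp [W, integral_div, integral_sub ((hL2 k).integrable one_le_two)])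
    (C := M 0 ^ (-(2 * ε)) / (2 * ε))
    fun n => by
      simpa only [hWvar] using sum_sub_div_rpow_one_add_le hM (hMpos 0) (by linarith) n
  filter_upwards [hconv] with ω ⟨c, hc⟩
  exact (tendsto_add_atTop_iff_nat 1).1
    (tendsto_sum_div_of_tendsto_sum_div hb (hbpos 0) hbtop hc)

end

theorem stmt10 {Ω : Type*} [MeasurableSpace Ω] (μ : Measure Ω) [IsProbabilityMeasure μ]
    (η : ℕ → Ω → ℝ)
    (hind : iIndepFun η μ)
    (hL2 : ∀ i, MemLp (η i) 2 μ)
    (hVar : Tendsto (fun x : ℕ => variance (fun ω => ∑ i ∈ Finset.Icc 1 x, η i ω) μ)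
      atTop atTop)
    (ε : ℝ) (hε : 0 < ε) :
    ∀ᵐ ω ∂μ, Tendsto (fun x : ℕ =>
        ((∑ i ∈ Finset.Icc 1 x, η i ω) - ∫ ω', (∑ i ∈ Finset.Icc 1 x, η i ω') ∂μ) /
          (variance (fun ω' => ∑ i ∈ Finset.Icc 1 x, η i ω') μ) ^ ((1 : ℝ) / 2 + ε))
      atTop (nhds 0) := by
  simp only [sum_Icc_one_eq_sum_range] at hVar ⊢
  have hshift : iIndepFun (fun i => η (i + 1)) μ := hind.precomp (add_left_injective 1)
  filter_upwards [hshift.ae_tendsto_sum_sub_integral_div_one_add_variance_rpow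
    (fun i => hL2 (i + 1)) hVar hε] with ω hω
  refine tendsto_div_rpow_of_tendsto_div_one_add_rpow hVar (hω.congr fun n => ?_)
  rw [integral_finsetSum _ fun i _ => (hL2 (i + 1)).integrable one_le_two, ← sum_sub_distrib]
end

section
/- As x → ∞, T(x) := Σ_{i=0}^{x-1} γ_i Σ_{j=0}^{i} π_j satisfies T(x) ~ x² ln x · ln ln x, in the case of weights w_0 = w_1 = 1 and w_x = x^{-1}(ln x)^{-1} for x ≥ 2. More precisely, lim_{x→∞} T(x)/(x² ln x ln ln x) = 1. -/
/-!
For `n ≥ 2` the product defining `γ n` telescopes to `w 0 / w n = n log n`, and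
`∑_{j ≤ i} π j = 2 ∑_{j < i} w j + w i`. Each `w j = 1 / (j log j)` is asymptotic to the
increment `log log (j + 1) - log log j` (mean value theorem, the derivative being monotone),
so summing equivalents of a divergent nonnegative series gives `∑_{j ≤ i} π j ~ 2 log log i`.
Hence the `i`-th summand of `T` is `~ 2 i log i log log i`, which by the same argument is
asymptotic to the increment of `x ^ 2 log x log log x` at `i`; summing once more gives the claim.
-/

open Filter Asymptotics Finset Topology

theorem prod_Icc_div_eq_div {G₀ : Type*} [CommGroupWithZero G₀] {f : ℕ → G₀}
    (hf : ∀ n, f n ≠ 0) (n : ℕ) : ∏ i ∈ Icc 1 n, f (i - 1) / f i = f 0 / f n := by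
  induction n with
  | zero => simp [hf 0]
  | succ n ih =>
    rw [prod_Icc_succ_top (by omega), ih, Nat.add_sub_cancel, div_mul_div_cancel₀ (hf n)]

theorem sum_range_succ_eq_two_mul_sum_add {w p : ℕ → ℝ} (hp0 : p 0 = w 0)
    (hp : ∀ n, 1 ≤ n → p n = w (n - 1) + w n) (n : ℕ) :
    ∑ j ∈ range (n + 1), p j = 2 * ∑ j ∈ range n, w j + w n := by
  induction n with
  | zero => simp [hp0]
  | succ n ih =>
    rw [sum_range_succ, ih, hp _ (by omega), Nat.add_sub_cancel, sum_range_succ]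
    ring

section

open Real

theorem Asymptotics.IsEquivalent.of_le_of_le {α : Type*} {l : Filter α} {a b c u : α → ℝ}
    (hb : b ~[l] u) (hc : c ~[l] u) (hba : ∀ᶠ x in l, b x ≤ a x)
    (hac : ∀ᶠ x in l, a x ≤ c x) : a ~[l] u := by
  refine isLittleO_iff.2 fun ε hε => ?_
  filter_upwards [isLittleO_iff.1 hb.isLittleO hε, isLittleO_iff.1 hc.isLittleO hε, hba, hac]
    with x hbx hcx hbax hacx
  simp only [Pi.sub_apply, Real.norm_eq_abs, abs_le] at hbx hcx ⊢
  constructor <;> linarith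

theorem Asymptotics.IsEquivalent.sum_range {a b : ℕ → ℝ} (h : a ~[atTop] b)
    (hb : ∀ᶠ n in atTop, 0 ≤ b n)
    (hsum : Tendsto (fun n => ∑ i ∈ range n, b i) atTop atTop) :
    (fun n => ∑ i ∈ range n, a i) ~[atTop] fun n => ∑ i ∈ range n, b i := by
  obtain ⟨N, hN⟩ := eventually_atTop.1 hb
  -- `IsLittleO.sum_range` needs a nonnegative comparison sequence everywhere.
  set b' : ℕ → ℝ := fun n => max (b n) 0
  have hbb' : b =ᶠ[atTop] b' := by
    filter_upwards [hb] with n hn using (max_eq_left hn).symm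
  have hshift : ∀ᶠ n in atTop,
      ∑ i ∈ range n, b i + ∑ i ∈ range N, (b' i - b i) = ∑ i ∈ range n, b' i := by
    filter_upwards [eventually_ge_atTop N] with n hn
    have := sum_subset (range_subset_range.2 hn) fun i _ hi =>
      show b' i - b i = 0 by simp [b', max_eq_left (hN i (by simpa using hi))]
    rw [this, sum_sub_distrib]
    ring
  have hb'b : (fun n => ∑ i ∈ range n, b' i) ~[atTop] fun n => ∑ i ∈ range n, b i :=
    (IsEquivalent.refl.add_const_of_norm_tendsto_atTop
      (tendsto_norm_atTop_atTop.comp hsum)).congr_left hshift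
  have hsmall := (h.isLittleO.trans_isBigO hbb'.isBigO).sum_range
    (fun n => le_max_right _ _) (hb'b.symm.tendsto_atTop hsum)
  exact (hsmall.trans_isBigO hb'b.isBigO).congr_left fun n => by simp [sum_sub_distrib]

theorem isEquivalent_sum_range_of_isEquivalent_sub {a f : ℕ → ℝ}
    (h : a ~[atTop] fun n => f (n + 1) - f n) (ha : ∀ᶠ n in atTop, 0 ≤ a n)
    (hf : Tendsto f atTop atTop) :
    (fun n => ∑ i ∈ range n, a i) ~[atTop] f := by
  have hsum : (fun n => ∑ i ∈ range n, (f (i + 1) - f i)) = fun n => f n + -f 0 := by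
    simp_rw [sum_range_sub, sub_eq_add_neg]
  refine (h.sum_range (h.symm.eventually_nonneg ha) ?_).trans ?_ <;> rw [hsum]
  · exact tendsto_atTop_add_const_right _ _ hf
  · exact IsEquivalent.refl.add_const_of_norm_tendsto_atTop (tendsto_norm_atTop_atTop.comp hf)

theorem isEquivalent_sub_of_hasDerivAt_of_monotoneOn {f g : ℝ → ℝ} {u : ℕ → ℝ} {a : ℝ}
    (hf : ∀ x, a ≤ x → HasDerivAt f (g x) x) (hg : MonotoneOn g (Set.Ici a))
    (hgu : (fun n : ℕ => g n) ~[atTop] u) (hgu' : (fun n : ℕ => g (n + 1)) ~[atTop] u) :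
    (fun n : ℕ => f (n + 1) - f n) ~[atTop] u := by
  have hmvt : ∀ᶠ n : ℕ in atTop,
      ∃ c, (n : ℝ) ≤ c ∧ c ≤ n + 1 ∧ f (n + 1) - f n = g c ∧ a ≤ n := by
    filter_upwards [(tendsto_natCast_atTop_atTop (R := ℝ)).eventually_ge_atTop a] with n hn
    obtain ⟨c, ⟨hnc, hcn⟩, hc⟩ := exists_hasDerivAt_eq_slope f g (lt_add_one (n : ℝ))
      (fun x hx => (hf x (hn.trans hx.1)).continuousAt.continuousWithinAt)
      (fun x hx => hf x (hn.trans hx.1.le))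
    exact ⟨c, hnc.le, hcn.le, by simpa using hc.symm, hn⟩
  refine hgu.of_le_of_le hgu' ?_ ?_ <;> filter_upwards [hmvt] with n ⟨c, hnc, hcn, hc, hn⟩ <;>
    rw [hc]
  · exact hg hn (hn.trans hnc) hnc
  · exact hg (hn.trans hnc) (show a ≤ (n : ℝ) + 1 by linarith) hcn

theorem isEquivalent_add_one : (fun x : ℝ => x + 1) ~[atTop] fun x => x :=
  IsEquivalent.refl.add_const_of_norm_tendsto_atTop tendsto_norm_atTop_atTop

theorem isEquivalent_log_add_one : (fun x => log (x + 1)) ~[atTop] log :=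
  isEquivalent_add_one.log tendsto_id

theorem isEquivalent_log_log_add_one :
    (fun x => log (log (x + 1))) ~[atTop] fun x => log (log x) :=
  isEquivalent_log_add_one.log tendsto_log_atTop

theorem one_lt_log_of_three_le {x : ℝ} (hx : 3 ≤ x) : 1 < log x := by
  rw [lt_log_iff_exp_lt (by linarith)]
  linarith [exp_one_lt_d9]

theorem isEquivalent_log_log_succ_sub :
    (fun n : ℕ => log (log (n + 1)) - log (log n)) ~[atTop] fun n => (n * log n)⁻¹ := by
  -- `-(x log x)⁻¹`, the derivative of `-log (log x)`, is monotone, unlike `(x log x)⁻¹`.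
  have hderiv (x : ℝ) (hx : 2 ≤ x) :
      HasDerivAt (fun t => -log (log t)) (-(x * log x)⁻¹) x := by
    have := (hasDerivAt_log_log (x := x) (by linarith) (by linarith) (by linarith)).neg
    rwa [div_eq_inv_mul, ← mul_inv, mul_comm] at this
  have hmono : MonotoneOn (fun x : ℝ => -(x * log x)⁻¹) (Set.Ici 2) := by
    intro x hx y hy hxy
    simp only [Set.mem_Ici] at hx hy
    have := log_pos (show (1 : ℝ) < x by linarith)
    simp only [neg_le_neg_iff]
    gcongr
  have hshift :
      (fun x : ℝ => -((x + 1) * log (x + 1))⁻¹) ~[atTop] fun x => -(x * log x)⁻¹ :=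
    (isEquivalent_add_one.mul isEquivalent_log_add_one).inv.neg
  simpa [neg_add_eq_sub] using (isEquivalent_sub_of_hasDerivAt_of_monotoneOn hderiv hmono
    IsEquivalent.refl (hshift.comp_tendsto tendsto_natCast_atTop_atTop)).neg

theorem isEquivalent_deriv_sq_mul_log_mul_log_log :
    (fun x : ℝ => 2 * x * log x * log (log x) + x * log (log x) + x) ~[atTop]
      fun x => 2 * x * log x * log (log x) := by
  refine isEquivalent_of_tendsto_one ?_
  have hlog := tendsto_log_atTop.const_mul_atTop (two_pos (α := ℝ))
  have hloglog := (tendsto_log_atTop.atTop_mul_atTop₀ (tendsto_log_atTop.comp tendsto_log_atTop))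
    |>.const_mul_atTop (two_pos (α := ℝ))
  have := (hlog.inv_tendsto_atTop.add hloglog.inv_tendsto_atTop).const_add 1
  rw [add_zero, add_zero] at this
  refine this.congr' ?_
  filter_upwards [eventually_ge_atTop 3] with x hx
  have hlx := one_lt_log_of_three_le hx
  have := log_pos hlx
  have : 0 < x := by linarith
  simp only [Pi.div_apply, Pi.inv_apply, Function.comp_apply]
  field_simp
  ring

theorem isEquivalent_sq_mul_log_mul_log_log_succ_sub :
    (fun n : ℕ => (n + 1 : ℝ) ^ 2 * log (n + 1) * log (log (n + 1)) -
        (n : ℝ) ^ 2 * log n * log (log n)) ~[atTop]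
      fun n => 2 * n * log n * log (log n) := by
  have hderiv (x : ℝ) (hx : 3 ≤ x) : HasDerivAt (fun t => t ^ 2 * log t * log (log t))
      (2 * x * log x * log (log x) + x * log (log x) + x) x := by
    have := one_lt_log_of_three_le hx
    have := ((hasDerivAt_pow 2 x).mul (hasDerivAt_log (by positivity))).mul
      (hasDerivAt_log_log (x := x) (by linarith) (by linarith) (by linarith))
    refine this.congr_deriv ?_
    simp only [Pi.mul_apply]
    field_simp
    ring
  have hmono : MonotoneOn (fun x => 2 * x * log x * log (log x) + x * log (log x) + x)
      (Set.Ici 3) := by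
    intro x hx y hy hxy
    simp only [Set.mem_Ici] at hx hy
    have hlx := one_lt_log_of_three_le hx
    have := one_lt_log_of_three_le hy
    have := log_pos hlx
    have : 0 ≤ 2 * y * log y := by positivity
    dsimp only
    gcongr
  have hshift : (fun x : ℝ => 2 * (x + 1) * log (x + 1) * log (log (x + 1))) ~[atTop]
      fun x => 2 * x * log x * log (log x) :=
    ((IsEquivalent.refl.mul isEquivalent_add_one).mul isEquivalent_log_add_one).mul
      isEquivalent_log_log_add_one
  have hequiv := isEquivalent_deriv_sq_mul_log_mul_log_log
  exact isEquivalent_sub_of_hasDerivAt_of_monotoneOn hderiv hmono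
    (hequiv.comp_tendsto tendsto_natCast_atTop_atTop)
    (((hequiv.comp_tendsto (tendsto_atTop_add_const_right _ 1 tendsto_id)).trans
      hshift).comp_tendsto tendsto_natCast_atTop_atTop)

theorem tendsto_log_log_natCast_atTop : Tendsto (fun n : ℕ => log (log n)) atTop atTop :=
  tendsto_log_atTop.comp (tendsto_log_atTop.comp tendsto_natCast_atTop_atTop)

theorem tendsto_sq_mul_log_mul_log_log_natCast_atTop :
    Tendsto (fun n : ℕ => (n : ℝ) ^ 2 * log n * log (log n)) atTop atTop :=
  (((tendsto_pow_atTop two_ne_zero).comp tendsto_natCast_atTop_atTop).atTop_mul_atTop₀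
    (tendsto_log_atTop.comp tendsto_natCast_atTop_atTop)).atTop_mul_atTop₀
      tendsto_log_log_natCast_atTop

theorem isEquivalent_sum_range_of_eventuallyEq_inv_mul_log {w : ℕ → ℝ}
    (hw : w =ᶠ[atTop] fun n : ℕ => ((n : ℝ) * log n)⁻¹) :
    (fun n => ∑ j ∈ range n, w j) ~[atTop] fun n => log (log n) := by
  refine isEquivalent_sum_range_of_isEquivalent_sub
    (hw.trans_isEquivalent (by push_cast; exact isEquivalent_log_log_succ_sub.symm)) ?_
    tendsto_log_log_natCast_atTop
  filter_upwards [hw] with n hn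
  rw [hn]
  positivity

theorem isEquivalent_sum_range_succ_of_eq_add {w p : ℕ → ℝ}
    (hw : w =ᶠ[atTop] fun n : ℕ => ((n : ℝ) * log n)⁻¹) (hp0 : p 0 = w 0)
    (hp : ∀ n, 1 ≤ n → p n = w (n - 1) + w n) :
    (fun n => ∑ j ∈ range (n + 1), p j) ~[atTop] fun n => 2 * log (log n) := by
  have hw_lim : Tendsto w atTop (𝓝 0) :=
    ((tendsto_natCast_atTop_atTop.atTop_mul_atTop₀ (tendsto_log_atTop.comp
      tendsto_natCast_atTop_atTop)).inv_tendsto_atTop).congr' hw.symm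
  have hw_small : w =o[atTop] fun n => 2 * log (log n) :=
    (hw_lim.isBigO_one ℝ).trans_isLittleO ((isLittleO_one_left_iff ℝ).2
      (tendsto_norm_atTop_atTop.comp (tendsto_log_log_natCast_atTop.const_mul_atTop two_pos)))
  simp_rw [sum_range_succ_eq_two_mul_sum_add hp0 hp]
  exact (IsEquivalent.refl.mul (isEquivalent_sum_range_of_eventuallyEq_inv_mul_log hw))
    |>.add_isLittleO hw_small

theorem isEquivalent_sum_range_of_isEquivalent_mul_log_mul_log_log {a : ℕ → ℝ}
    (ha : a ~[atTop] fun n => 2 * n * log n * log (log n)) :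
    (fun n => ∑ i ∈ range n, a i) ~[atTop]
      fun n : ℕ => (n : ℝ) ^ 2 * log n * log (log n) := by
  refine isEquivalent_sum_range_of_isEquivalent_sub (ha.trans ?_) (ha.eventually_nonneg ?_)
    tendsto_sq_mul_log_mul_log_log_natCast_atTop
  · push_cast
    exact isEquivalent_sq_mul_log_mul_log_log_succ_sub.symm
  · filter_upwards [eventually_ge_atTop 3] with n hn
    have := log_pos (one_lt_log_of_three_le (by exact_mod_cast hn : (3 : ℝ) ≤ n))
    positivity

end

theorem stmt16_general (w γ π T : ℕ → ℝ)
    (hw0 : w 0 = 1) (hw1 : w 1 = 1)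
    (hw : ∀ x, 2 ≤ x → w x = (x : ℝ)⁻¹ * (Real.log x)⁻¹)
    (hγ : ∀ x, 1 ≤ x → γ x = ∏ i ∈ Finset.Icc 1 x, w (i - 1) / w i)
    (hπ0 : π 0 = w 0)
    (hπ : ∀ x, 1 ≤ x → π x = w (x - 1) + w x)
    (hT : ∀ x, T x = ∑ i ∈ Finset.range x, γ i * ∑ j ∈ Finset.range (i + 1), π j) :
    Filter.Tendsto (fun x : ℕ =>
        T x / ((x : ℝ) ^ 2 * Real.log x * Real.log (Real.log x)))
      Filter.atTop (nhds 1) := by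
  have hw_eq : w =ᶠ[atTop] fun n : ℕ => ((n : ℝ) * Real.log n)⁻¹ := by
    filter_upwards [eventually_ge_atTop 2] with n hn using (hw n hn).trans (mul_inv _ _).symm
  have hw_pos (n : ℕ) : 0 < w n := by
    rcases (by omega : n = 0 ∨ n = 1 ∨ 2 ≤ n) with rfl | rfl | hn
    · simp [hw0]
    · simp [hw1]
    · have := Real.log_pos (by exact_mod_cast hn : (1 : ℝ) < n)
      rw [hw n hn]
      positivity
  have hγ_eq : γ =ᶠ[atTop] fun n : ℕ => (n : ℝ) * Real.log n := by
    filter_upwards [hw_eq, eventually_ge_atTop 1] with n hwn hn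
    rw [hγ n hn, prod_Icc_div_eq_div (fun n => (hw_pos n).ne'), hw0, hwn, one_div, inv_inv]
  have ha : (fun n => γ n * ∑ j ∈ range (n + 1), π j) ~[atTop]
      fun n => 2 * n * Real.log n * Real.log (Real.log n) :=
    (hγ_eq.isEquivalent.mul (isEquivalent_sum_range_succ_of_eq_add hw_eq hπ0 hπ)).congr_right
      (Eventually.of_forall fun n => by simp only [Pi.mul_apply]; ring)
  have hT_equiv := isEquivalent_sum_range_of_isEquivalent_mul_log_mul_log_log ha
  rw [← funext hT] at hT_equiv
  exact (isEquivalent_iff_tendsto_one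
    (tendsto_sq_mul_log_mul_log_log_natCast_atTop.eventually_ne_atTop 0)).1 hT_equiv

theorem stmt16 (w γ π T : ℕ → ℝ)
    (hw0 : w 0 = 1) (hw1 : w 1 = 1)
    (hw : ∀ x, 2 ≤ x → w x = (x : ℝ)⁻¹ * (Real.log x)⁻¹)
    (hγ0 : γ 0 = 1)
    (hγ : ∀ x, 1 ≤ x → γ x = ∏ i ∈ Finset.Icc 1 x, w (i - 1) / w i)
    (hπ0 : π 0 = w 0)
    (hπ : ∀ x, 1 ≤ x → π x = w (x - 1) + w x)
    (hT : ∀ x, T x = ∑ i ∈ Finset.range x, γ i * ∑ j ∈ Finset.range (i + 1), π j) :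
    Filter.Tendsto (fun x : ℕ =>
        T x / ((x : ℝ) ^ 2 * Real.log x * Real.log (Real.log x)))
      Filter.atTop (nhds 1) :=
  stmt16_general w γ π T hw0 hw1 hw hγ hπ0 hπ hT
end
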